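/- arXiv:1903.02587 — 2 statements merged into one kernel-verified Lean document; each statement's English description precedes it below -/
import Mathlib

section
/- Let F : ℝ^n → ℝ^n be μ-strongly monotone and θ-Lipschitz with F(x*) = 0, and let B = blkdiag(b₁ I_{n₁}, …, b_N I_{n_N}) with bᵢ > 0. The full-information double-integrator closed loop ẋ = v, v̇ = -F(x + Bv) - B⁻¹v has the property that γ := x + Bv satisfies γ̇ = -B F(γ), and hence γ(t) → x* as t → ∞ from any initial condition; moreover, with W(γ) = ½(γ - x*)ᵀ B⁻¹ (γ - x*) one has Ẇ ≤ -μ‖γ - x*‖² along solutions. -/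
open scoped RealInnerProductSpace

/-- Full-information double-integrator dynamics `ẋ = v`, `v̇ = -F(x + Bv) - B⁻¹v`
with `F` μ-strongly monotone, θ-Lipschitz, `F(x*) = 0`, and
`B = blkdiag(b₁I,…,b_NI)`, `bᵢ > 0`: the variable `γ = x + Bv` satisfies
`γ̇ = -BF(γ)`, converges to `x*`, and `W(γ) = ½(γ-x*)ᵀB⁻¹(γ-x*)` satisfies
`Ẇ ≤ -μ‖γ - x*‖²` along solutions. -/
theorem double_integrator_predicted_state (N m : ℕ) (hN : 1 ≤ N)
    (μ θ : ℝ) (hμ : 0 < μ) (hθ : 0 < θ)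
    (b : Fin N → ℝ) (hb : ∀ i, 0 < b i)
    (B Binv : EuclideanSpace ℝ (Fin N × Fin m) →L[ℝ] EuclideanSpace ℝ (Fin N × Fin m))
    (hB : ∀ w p, B w p = b p.1 * w p) (hBinv : ∀ w p, Binv w p = w p / b p.1)
    (F : EuclideanSpace ℝ (Fin N × Fin m) → EuclideanSpace ℝ (Fin N × Fin m))
    (hmono : ∀ x y, μ * ‖x - y‖ ^ 2 ≤ ⟪x - y, F x - F y⟫)
    (hlip : ∀ x y, ‖F x - F y‖ ≤ θ * ‖x - y‖)
    (xstar : EuclideanSpace ℝ (Fin N × Fin m)) (hF0 : F xstar = 0)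
    (x v : ℝ → EuclideanSpace ℝ (Fin N × Fin m))
    (hx : ∀ t, HasDerivAt x (v t) t)
    (hv : ∀ t, HasDerivAt v (-F (x t + B (v t)) - Binv (v t)) t) :
    (∀ t, HasDerivAt (fun s => x s + B (v s)) (-(B (F (x t + B (v t))))) t) ∧
    Filter.Tendsto (fun t => x t + B (v t)) Filter.atTop (nhds xstar) ∧
    ∃ W' : ℝ → ℝ,
      ∀ t, HasDerivAt
          (fun s => (1 / 2 : ℝ) *
            ⟪x s + B (v s) - xstar, Binv (x s + B (v s) - xstar)⟫) (W' t) t ∧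
        W' t ≤ -μ * ‖x t + B (v t) - xstar‖ ^ 2 := by
  have hbne : ∀ i, b i ≠ 0 := fun i => (hb i).ne'
  set γ : ℝ → EuclideanSpace ℝ (Fin N × Fin m) := fun s => x s + B (v s) with hγdef
  have hBBinv : ∀ w, B (Binv w) = w := by
    intro w; ext p; rw [hB, hBinv, mul_comm, div_mul_cancel₀ _ (hbne p.1)]
  have hBinvB : ∀ w, Binv (B w) = w := by
    intro w; ext p; rw [hBinv, hB]; exact mul_div_cancel_left₀ _ (hbne p.1)
  -- derivative of γ
  have hγ' : ∀ t, HasDerivAt γ (-(B (F (γ t)))) t := by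
    intro t
    have h1 : HasDerivAt (fun s => B (v s)) (B (-F (γ t) - Binv (v t))) t :=
      B.hasFDerivAt.comp_hasDerivAt t (hv t)
    have h2 := (hx t).add h1
    refine h2.congr_deriv ?_
    rw [map_sub, map_neg, hBBinv]
    abel
  -- inner product identity
  have hinner : ∀ u w : EuclideanSpace ℝ (Fin N × Fin m), ⟪B u, Binv w⟫ = ⟪u, w⟫ := by
    intro u w
    simp only [PiLp.inner_apply, RCLike.inner_apply, conj_trivial]
    refine Finset.sum_congr rfl fun p _ => ?_
    rw [hB, hBinv]
    field_simp [hbne p.1]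
  -- Lyapunov derivative
  set W' : ℝ → ℝ := fun t => -⟪γ t - xstar, F (γ t)⟫ with hW'def
  have hW : ∀ t, HasDerivAt (fun s => (1 / 2 : ℝ) * ⟪γ s - xstar, Binv (γ s - xstar)⟫)
      (W' t) t := by
    intro t
    have he : HasDerivAt (fun s => γ s - xstar) (-(B (F (γ t)))) t :=
      (hγ' t).sub_const xstar
    have hg : HasDerivAt (fun s => Binv (γ s - xstar)) (Binv (-(B (F (γ t))))) t :=
      Binv.hasFDerivAt.comp_hasDerivAt t he
    have h3 := (HasDerivAt.inner ℝ he hg).const_mul (1 / 2 : ℝ)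
    refine h3.congr_deriv ?_
    rw [map_neg, hBinvB]
    rw [inner_neg_right, inner_neg_left, hinner]
    linarith [real_inner_comm (γ t - xstar) (F (γ t))]
  -- Lyapunov derivative bound
  have hWle : ∀ t, W' t ≤ -μ * ‖γ t - xstar‖ ^ 2 := by
    intro t
    have := hmono (γ t) xstar
    rw [hF0, sub_zero] at this
    simp only [hW'def, neg_mul]
    linarith
  refine ⟨hγ', ?_, W', fun t => ⟨hW t, hWle t⟩⟩
  -- convergence
  have hNe : (Finset.univ : Finset (Fin N)).Nonempty := ⟨⟨0, hN⟩, Finset.mem_univ _⟩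
  set bmin : ℝ := Finset.univ.inf' hNe b with hbmindef
  set bmax : ℝ := Finset.univ.sup' hNe b with hbmaxdef
  have hbmin : 0 < bmin := by
    rw [hbmindef, Finset.lt_inf'_iff]; exact fun i _ => hb i
  have hble : ∀ i, bmin ≤ b i := fun i => Finset.inf'_le b (Finset.mem_univ i)
  have hbge : ∀ i, b i ≤ bmax := fun i => Finset.le_sup' b (Finset.mem_univ i)
  have hbmax : 0 < bmax := lt_of_lt_of_le (hb ⟨0, hN⟩) (hbge ⟨0, hN⟩)
  have hform : ∀ w : EuclideanSpace ℝ (Fin N × Fin m),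
      ⟪w, Binv w⟫ = ∑ p, w p ^ 2 / b p.1 := by
    intro w
    simp only [PiLp.inner_apply, RCLike.inner_apply, conj_trivial]
    refine Finset.sum_congr rfl fun p _ => ?_
    rw [hBinv]; ring
  have hnormsq : ∀ w : EuclideanSpace ℝ (Fin N × Fin m), ‖w‖ ^ 2 = ∑ p, w p ^ 2 := by
    intro w
    rw [← real_inner_self_eq_norm_sq]
    simp only [PiLp.inner_apply, RCLike.inner_apply, conj_trivial]
    exact Finset.sum_congr rfl fun p _ => (sq (w p)).symm
  have hupper : ∀ w : EuclideanSpace ℝ (Fin N × Fin m), ⟪w, Binv w⟫ ≤ ‖w‖ ^ 2 / bmin := by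
    intro w
    rw [hform, hnormsq, Finset.sum_div]
    refine Finset.sum_le_sum fun p _ => ?_
    exact div_le_div_of_nonneg_left (sq_nonneg _) hbmin (hble p.1)
  have hlower : ∀ w : EuclideanSpace ℝ (Fin N × Fin m), ‖w‖ ^ 2 / bmax ≤ ⟪w, Binv w⟫ := by
    intro w
    rw [hform, hnormsq, Finset.sum_div]
    refine Finset.sum_le_sum fun p _ => ?_
    exact div_le_div_of_nonneg_left (sq_nonneg _) (hb p.1) (hbge p.1)
  set Wf : ℝ → ℝ := fun t => (1 / 2 : ℝ) * ⟪γ t - xstar, Binv (γ t - xstar)⟫ with hWfdef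
  set k : ℝ := 2 * μ * bmin with hkdef
  have hk : 0 < k := by positivity
  have hWdecay : ∀ t, W' t ≤ -k * Wf t := by
    intro t
    have h1 := hWle t
    have h2 := hupper (γ t - xstar)
    have h3 : bmin * ⟪γ t - xstar, Binv (γ t - xstar)⟫ ≤ ‖γ t - xstar‖ ^ 2 := by
      rw [mul_comm, ← le_div_iff₀ hbmin]; exact h2
    have key : -k * Wf t = -μ * (bmin * ⟪γ t - xstar, Binv (γ t - xstar)⟫) := by
      simp only [hWfdef, hkdef]; ring
    rw [key]
    nlinarith [mul_le_mul_of_nonneg_left h3 hμ.le]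
  -- g t = Wf t * exp (k t) is antitone
  set g : ℝ → ℝ := fun t => Wf t * Real.exp (k * t) with hgdef
  have hg' : ∀ t, HasDerivAt g ((W' t + k * Wf t) * Real.exp (k * t)) t := by
    intro t
    have hexp : HasDerivAt (fun s : ℝ => Real.exp (k * s)) (Real.exp (k * t) * k) t := by
      simpa using ((hasDerivAt_id t).const_mul k).exp
    have := (hW t).mul hexp
    refine this.congr_deriv ?_
    ring
  have hanti : Antitone g := by
    apply antitone_of_deriv_nonpos
    · exact fun t => (hg' t).differentiableAt
    · intro t
      rw [(hg' t).deriv]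
      have h1 := hWdecay t
      have h2 := Real.exp_pos (k * t)
      nlinarith
  have hWf0 : ∀ t, 0 ≤ Wf t := by
    intro t
    have := hlower (γ t - xstar)
    have h2 : (0:ℝ) ≤ ‖γ t - xstar‖ ^ 2 / bmax := by positivity
    simp only [hWfdef]
    linarith
  have hWfbound : ∀ t, 0 ≤ t → Wf t ≤ Wf 0 * Real.exp (-(k * t)) := by
    intro t ht
    have h := hanti ht
    simp only [hgdef, mul_zero, Real.exp_zero, mul_one] at h
    rw [Real.exp_neg, ← div_eq_mul_inv, le_div_iff₀ (Real.exp_pos _)]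
    exact h
  -- squeeze
  have hsq : Filter.Tendsto (fun t => ‖γ t - xstar‖ ^ 2) Filter.atTop (nhds 0) := by
    apply squeeze_zero' (Filter.Eventually.of_forall fun t => by positivity)
    · filter_upwards [Filter.eventually_ge_atTop (0:ℝ)] with t ht
      have h1 := hlower (γ t - xstar)
      have h2 := hWfbound t ht
      calc ‖γ t - xstar‖ ^ 2 ≤ bmax * ⟪γ t - xstar, Binv (γ t - xstar)⟫ := by
            rw [div_le_iff₀ hbmax] at h1; linarith [h1]
        _ = 2 * bmax * Wf t := by simp only [hWfdef]; ring
        _ ≤ 2 * bmax * Wf 0 * Real.exp (-(k * t)) := by nlinarith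
    · have h1 : Filter.Tendsto (fun t : ℝ => -(k * t)) Filter.atTop Filter.atBot := by
        apply Filter.tendsto_neg_atBot_iff.mpr
        exact Filter.Tendsto.const_mul_atTop hk Filter.tendsto_id
      have := Real.tendsto_exp_atBot.comp h1
      have h2 := this.const_mul (2 * bmax * Wf 0)
      simpa using h2
  have hnorm : Filter.Tendsto (fun t => ‖γ t - xstar‖) Filter.atTop (nhds 0) := by
    have h := (Real.continuous_sqrt.tendsto 0).comp hsq
    rw [Real.sqrt_zero] at h
    exact h.congr fun t => Real.sqrt_sq (norm_nonneg _)
  exact tendsto_iff_norm_sub_tendsto_zero.mpr hnorm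
end

section
/- With V(γ̃) = ½ γ̃ᵀ Rᵀ B⁻¹ R γ̃ + ½ γ̃ᵀ Sᵀ S γ̃ and the dynamics γ̃̇ = -RᵀB F(γ̃ + γ̄) - (RᵀBR + SᵀS)𝐋γ̃ + RᵀBDρ, the derivative of V along solutions equals V̇ = -γ̃ᵀ(Rᵀ F(γ̃ + γ̄) + 𝐋γ̃ - RᵀDρ), i.e., the B-dependence cancels and the bound coincides with that of the single-integrator case. -/
open scoped RealInnerProductSpace
open ContinuousLinearMap

/-!
Write `V(γ) = ½ ⟪γ, P γ⟫` with `P = Rᵀ B⁻¹ R + Sᵀ S`. Since `P` is symmetric, `V̇ = ⟪γ, P γ̇⟫`.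
The orthogonality relations between `R` and `S` make `P` a left inverse of the gain
`Rᵀ B R + Sᵀ S` and give `P Rᵀ B = Rᵀ`, so `P γ̇` is exactly the single-integrator vector field
`-Rᵀ F(γ + γ̄) - 𝐋 γ + Rᵀ D ρ`.
-/

theorem HasDerivAt.half_inner_self_apply {E : Type*} [NormedAddCommGroup E]
    [InnerProductSpace ℝ E] {P : E →L[ℝ] E}
    (hP : (P : E →ₗ[ℝ] E).IsSymmetric) {γ : ℝ → E} {v : E} {t : ℝ}
    (hγ : HasDerivAt γ v t) :
    HasDerivAt (fun s => (1 / 2 : ℝ) * ⟪γ s, P (γ s)⟫) ⟪γ t, P v⟫ t := by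
  refine ((hγ.inner ℝ (P.hasFDerivAt.comp_hasDerivAt t hγ)).const_mul
    (1 / 2 : ℝ)).congr_deriv ?_
  have : ⟪v, P (γ t)⟫ = ⟪γ t, P v⟫ := by rw [real_inner_comm]; exact hP _ _
  simp only [Function.comp_apply, this]
  ring

section

variable {E K K' : Type*}
  [NormedAddCommGroup E] [InnerProductSpace ℝ E] [CompleteSpace E]
  [NormedAddCommGroup K] [InnerProductSpace ℝ K] [CompleteSpace K]
  [NormedAddCommGroup K'] [InnerProductSpace ℝ K'] [CompleteSpace K']

noncomputable def lyapunovOperator (R : E →L[ℝ] K) (S : E →L[ℝ] K') (Binv : K →L[ℝ] K) :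
    E →L[ℝ] E :=
  adjoint R ∘L Binv ∘L R + adjoint S ∘L S

variable {R : E →L[ℝ] K} {S : E →L[ℝ] K'} {Binv : K →L[ℝ] K}

theorem inner_lyapunovOperator_self (x : E) :
    ⟪x, lyapunovOperator R S Binv x⟫ = ⟪R x, Binv (R x)⟫ + ⟪S x, S x⟫ := by
  simp [lyapunovOperator, inner_add_right, adjoint_inner_right]

theorem isSymmetric_lyapunovOperator (hBinv : (Binv : K →ₗ[ℝ] K).IsSymmetric) :
    (lyapunovOperator R S Binv : E →ₗ[ℝ] E).IsSymmetric := by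
  intro x y
  simpa [lyapunovOperator, inner_add_left, inner_add_right, adjoint_inner_right,
    adjoint_inner_left] using hBinv (R x) (R y)

theorem comp_adjoint_eq_zero_comm (hRS : R ∘L adjoint S = 0) : S ∘L adjoint R = 0 := by
  simpa [adjoint_comp] using congrArg adjoint hRS

theorem lyapunovOperator_comp_adjoint_comp (B : K →L[ℝ] K)
    (hRR : R ∘L adjoint R = .id ℝ K) (hSR : S ∘L adjoint R = 0)
    (hBinvB : Binv ∘L B = .id ℝ K) :
    lyapunovOperator R S Binv ∘L adjoint R ∘L B = adjoint R := by
  ext1 x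
  have hRR' : R (adjoint R (B x)) = B x := congr($hRR (B x))
  have hSR' : S (adjoint R (B x)) = 0 := congr($hSR (B x))
  have hBinvB' : Binv (B x) = x := congr($hBinvB x)
  simp [lyapunovOperator, hRR', hSR', hBinvB']

theorem lyapunovOperator_comp_weighted (B : K →L[ℝ] K)
    (hRS : adjoint R ∘L R + adjoint S ∘L S = .id ℝ E)
    (hRR : R ∘L adjoint R = .id ℝ K) (hSS : S ∘L adjoint S = .id ℝ K')
    (hRSt : R ∘L adjoint S = 0) (hBinvB : Binv ∘L B = .id ℝ K) :
    lyapunovOperator R S Binv ∘L (adjoint R ∘L B ∘L R + adjoint S ∘L S) = .id ℝ E := by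
  have hSR := comp_adjoint_eq_zero_comm hRSt
  ext1 x
  have hRS' : adjoint R (R x) + adjoint S (S x) = x := congr($hRS x)
  have hRR' : R (adjoint R (B (R x))) = B (R x) := congr($hRR (B (R x)))
  have hSR' : S (adjoint R (B (R x))) = 0 := congr($hSR (B (R x)))
  have hRSt' : R (adjoint S (S x)) = 0 := congr($hRSt (S x))
  have hSS' : S (adjoint S (S x)) = S x := congr($hSS (S x))
  have hBinvB' : Binv (B (R x)) = R x := congr($hBinvB (R x))
  simp [lyapunovOperator, hRR', hSR', hRSt', hSS', hBinvB', hRS']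

theorem lyapunovOperator_apply_dynamics (B : K →L[ℝ] K)
    (hRS : adjoint R ∘L R + adjoint S ∘L S = .id ℝ E)
    (hRR : R ∘L adjoint R = .id ℝ K) (hSS : S ∘L adjoint S = .id ℝ K')
    (hRSt : R ∘L adjoint S = 0) (hBinvB : Binv ∘L B = .id ℝ K) (a r : K) (l : E) :
    lyapunovOperator R S Binv
        (-adjoint R (B a) - (adjoint R ∘L B ∘L R + adjoint S ∘L S) l + adjoint R (B r)) =
      -adjoint R a - l + adjoint R r := by
  have hB : ∀ y, lyapunovOperator R S Binv (adjoint R (B y)) = adjoint R y := fun y =>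
    congr($(lyapunovOperator_comp_adjoint_comp B hRR (comp_adjoint_eq_zero_comm hRSt) hBinvB) y)
  have hW := congr($(lyapunovOperator_comp_weighted B hRS hRR hSS hRSt hBinvB) l)
  simp only [comp_apply, id_apply] at hW
  simp only [map_add, map_sub, map_neg, hB, hW]

end

theorem double_integrator_lyapunov_derivative_general
    (ι κ κ' κ'' : Type*) [Fintype ι] [Fintype κ] [Fintype κ'] [Fintype κ'']
    (R : EuclideanSpace ℝ ι →L[ℝ] EuclideanSpace ℝ κ)
    (S : EuclideanSpace ℝ ι →L[ℝ] EuclideanSpace ℝ κ')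
    (hRS : (adjoint R).comp R + (adjoint S).comp S = ContinuousLinearMap.id ℝ _)
    (hRR : R.comp (adjoint R) = ContinuousLinearMap.id ℝ _)
    (hSS : S.comp (adjoint S) = ContinuousLinearMap.id ℝ _)
    (hRSt : R.comp (adjoint S) = 0)
    (B Binv : EuclideanSpace ℝ κ →L[ℝ] EuclideanSpace ℝ κ)
    (hBinvB : Binv.comp B = ContinuousLinearMap.id ℝ _)
    (hBinvSym : ∀ u w, ⟪Binv u, w⟫ = ⟪u, Binv w⟫)
    (L : EuclideanSpace ℝ ι →L[ℝ] EuclideanSpace ℝ ι)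
    (F : EuclideanSpace ℝ ι → EuclideanSpace ℝ κ)
    (γbar : EuclideanSpace ℝ ι)
    (D : EuclideanSpace ℝ κ'' →L[ℝ] EuclideanSpace ℝ κ)
    (γ : ℝ → EuclideanSpace ℝ ι) (ρ : ℝ → EuclideanSpace ℝ κ'')
    (hdyn : ∀ t, HasDerivAt γ
      (-(adjoint R) (B (F (γ t + γbar)))
        - ((adjoint R).comp (B.comp R) + (adjoint S).comp S) (L (γ t))
        + (adjoint R) (B (D (ρ t)))) t) :
    ∀ t, HasDerivAt
      (fun s => (1 / 2 : ℝ) * ⟪R (γ s), Binv (R (γ s))⟫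
              + (1 / 2 : ℝ) * ⟪S (γ s), S (γ s)⟫)
      (-⟪γ t, (adjoint R) (F (γ t + γbar)) + L (γ t) - (adjoint R) (D (ρ t))⟫) t := by
  intro t
  have hV := (hdyn t).half_inner_self_apply (P := lyapunovOperator R S Binv)
    (isSymmetric_lyapunovOperator hBinvSym)
  rw [lyapunovOperator_apply_dynamics B hRS hRR hSS hRSt hBinvB] at hV
  simp only [inner_lyapunovOperator_self, mul_add] at hV
  convert hV using 1
  rw [← inner_neg_right]
  congr 1
  abel

/-- Along the partial-information double-integrator dynamics
`γ̃̇ = -RᵀB F(γ̃+γ̄) - (RᵀBR + SᵀS)𝐋γ̃ + RᵀBDρ`, the Lyapunov function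
`V(γ̃) = ½γ̃ᵀRᵀB⁻¹Rγ̃ + ½γ̃ᵀSᵀSγ̃` has derivative
`V̇ = -γ̃ᵀ(RᵀF(γ̃+γ̄) + 𝐋γ̃ - RᵀDρ)`: the `B`-dependence cancels. -/
theorem double_integrator_lyapunov_derivative
    (ι κ κ' κ'' : Type*) [Fintype ι] [Fintype κ] [Fintype κ'] [Fintype κ'']
    (R : EuclideanSpace ℝ ι →L[ℝ] EuclideanSpace ℝ κ)
    (S : EuclideanSpace ℝ ι →L[ℝ] EuclideanSpace ℝ κ')
    (hRS : (adjoint R).comp R + (adjoint S).comp S = ContinuousLinearMap.id ℝ _)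
    (hRR : R.comp (adjoint R) = ContinuousLinearMap.id ℝ _)
    (hSS : S.comp (adjoint S) = ContinuousLinearMap.id ℝ _)
    (hRSt : R.comp (adjoint S) = 0)
    (B Binv : EuclideanSpace ℝ κ →L[ℝ] EuclideanSpace ℝ κ)
    (hBBinv : B.comp Binv = ContinuousLinearMap.id ℝ _)
    (hBinvB : Binv.comp B = ContinuousLinearMap.id ℝ _)
    (hBinvSym : ∀ u w, ⟪Binv u, w⟫ = ⟪u, Binv w⟫)
    (L : EuclideanSpace ℝ ι →L[ℝ] EuclideanSpace ℝ ι)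
    (F : EuclideanSpace ℝ ι → EuclideanSpace ℝ κ)
    (γbar : EuclideanSpace ℝ ι)
    (D : EuclideanSpace ℝ κ'' →L[ℝ] EuclideanSpace ℝ κ)
    (γ : ℝ → EuclideanSpace ℝ ι) (ρ : ℝ → EuclideanSpace ℝ κ'')
    (hdyn : ∀ t, HasDerivAt γ
      (-(adjoint R) (B (F (γ t + γbar)))
        - ((adjoint R).comp (B.comp R) + (adjoint S).comp S) (L (γ t))
        + (adjoint R) (B (D (ρ t)))) t) :
    ∀ t, HasDerivAt
      (fun s => (1 / 2 : ℝ) * ⟪R (γ s), Binv (R (γ s))⟫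
              + (1 / 2 : ℝ) * ⟪S (γ s), S (γ s)⟫)
      (-⟪γ t, (adjoint R) (F (γ t + γbar)) + L (γ t) - (adjoint R) (D (ρ t))⟫) t :=
  double_integrator_lyapunov_derivative_general ι κ κ' κ'' R S hRS hRR hSS hRSt B Binv hBinvB
    hBinvSym L F γbar D γ ρ hdyn
end
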